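/- Let N ≥ 2 be an odd integer that is not prime. If N is monomially irreducible, then N = p_1·p_2⋯p_r where r ≥ 2 and the p_i are pairwise distinct odd prime numbers such that: p_i ≡ 3 or −3 (mod 5) for all i; p_i ≡ 3 or −3 (mod 8) for all i; and every p_i with p_i ≤ 1000 belongs to Ω = {107, 163, 173, 277, 283, 317, 347, 523, 557, 563, 613, 653, 733, 773, 787, 877, 907, 997}. -/
import Mathlib
set_option maxRecDepth 100000
set_option maxHeartbeats 1000000


namespace Monomial

/-- The elementary matrix `[[a, -1], [1, 0]]` over `ZMod N`. -/
def mat {N : ℕ} (a : ZMod N) : Matrix (Fin 2) (Fin 2) (ZMod N) := !![a, -1; 1, 0]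

/-- `M [a₁, …, aₙ] = mat aₙ * ⋯ * mat a₁`. -/
def M {N : ℕ} (l : List (ZMod N)) : Matrix (Fin 2) (Fin 2) (ZMod N) :=
  (l.reverse.map mat).prod

/-- A tuple is a solution of (E_N) if the associated matrix is `±Id`. -/
def IsSolution {N : ℕ} (l : List (ZMod N)) : Prop := M l = 1 ∨ M l = -1

/-- The sum `(a₁,…,aₙ) ⊕ (b₁,…,bₘ) = (a₁+bₘ, a₂,…,aₙ₋₁, aₙ+b₁, b₂,…,bₘ₋₁)`. -/
def osum {N : ℕ} (u v : List (ZMod N)) : List (ZMod N) :=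
  (u.headI + v.getLastD 0) ::
    ((u.drop 1).dropLast ++ (u.getLastD 0 + v.headI) :: (v.drop 1).dropLast)

/-- Equivalence: `v` is a cyclic permutation of `u` or of the reversal of `u`. -/
def CyclicEquiv {N : ℕ} (u v : List (ZMod N)) : Prop :=
  (∃ i, v = u.rotate i) ∨ (∃ i, v = u.reverse.rotate i)

/-- A tuple is reducible if, up to equivalence, it is a sum of an `m`-tuple (`m ≥ 3`)
with a solution of size `l ≥ 3`. -/
def Reducible {N : ℕ} (c : List (ZMod N)) : Prop :=
  ∃ a b : List (ZMod N), 3 ≤ a.length ∧ 3 ≤ b.length ∧ IsSolution b ∧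
    CyclicEquiv c (osum a b)

/-- An irreducible solution: a solution which is not reducible (and `(0,0)` is
not considered irreducible). -/
def IrreducibleSol {N : ℕ} (c : List (ZMod N)) : Prop :=
  IsSolution c ∧ ¬ Reducible c ∧ c ≠ [0, 0]

/-- The size of the `k`-monomial minimal solution of (E_N): the least `n > 0` such
that the constant `n`-tuple `(k, …, k)` is a solution. -/
noncomputable def monomialMinimalSize (N : ℕ) (k : ZMod N) : ℕ :=
  sInf {n | 0 < n ∧ IsSolution (List.replicate n k)}

/-- `N` is monomially irreducible if, for every `k ≠ 0`, the `k`-monomial minimal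
solution of (E_N) is irreducible. -/
def MonomiallyIrreducible (N : ℕ) : Prop :=
  ∀ k : ZMod N, k ≠ 0 → IrreducibleSol (List.replicate (monomialMinimalSize N k) k)

/-- The continuant `Kₙ(x, …, x)` at a constant tuple: `K₀ = 1`, `K₁ = x`,
`Kₙ₊₂ = x * Kₙ₊₁ - Kₙ`. -/
def K {N : ℕ} (x : ZMod N) : ℕ → ZMod N
  | 0 => 1
  | 1 => x
  | n + 2 => x * K x (n + 1) - K x n

section Infra
variable {N : ℕ}

lemma K_zero (x : ZMod N) : K x 0 = 1 := rfl
lemma K_one (x : ZMod N) : K x 1 = x := rfl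
lemma K_rec (x : ZMod N) (n : ℕ) : K x (n+2) = x * K x (n+1) - K x n := rfl

lemma fin2_iff {α : Type*} {a b c d e f g h : α} :
    !![a,b;c,d] = !![e,f;g,h] ↔ a = e ∧ b = f ∧ c = g ∧ d = h := by
  constructor
  · intro H
    exact ⟨congrFun (congrFun H 0) 0, congrFun (congrFun H 0) 1,
      congrFun (congrFun H 1) 0, congrFun (congrFun H 1) 1⟩
  · rintro ⟨rfl, rfl, rfl, rfl⟩; rfl

lemma fin2_eq {α : Type*} {a b c d e f g h : α} (h1 : a = e) (h2 : b = f)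
    (h3 : c = g) (h4 : d = h) : !![a,b;c,d] = !![e,f;g,h] :=
  fin2_iff.mpr ⟨h1, h2, h3, h4⟩

lemma neg_one_fin_two : (-1 : Matrix (Fin 2) (Fin 2) (ZMod N)) = !![-1,0;0,-1] := by
  have : (-1 : Matrix (Fin 2) (Fin 2) (ZMod N)) = -(!![1,0;0,1]) := by
    rw [← Matrix.one_fin_two]
  rw [this]
  ext i j
  fin_cases i <;> fin_cases j <;> simp

lemma M_replicate (k : ZMod N) (n : ℕ) : M (List.replicate n k) = mat k ^ n := by
  simp [M, List.reverse_replicate, List.map_replicate, List.prod_replicate]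

lemma pow_mat (k : ZMod N) (n : ℕ) :
    mat k ^ (n+1) = !![K k (n+1), -K k n; K k n, K k (n+1) - k * K k n] := by
  induction n with
  | zero =>
    rw [pow_one, mat]
    exact fin2_eq rfl (by simp [K_zero]) rfl (by simp [K_zero, K_one])
  | succ n ih =>
    rw [pow_succ, ih, mat, Matrix.mul_fin_two]
    refine fin2_eq ?_ ?_ ?_ ?_ <;> first
    | (rw [K_rec]; ring)
    | ring

lemma isSolution_replicate_iff (k : ZMod N) (n : ℕ) :
    IsSolution (List.replicate (n+1) k) ↔
      K k n = 0 ∧ (K k (n+1) = 1 ∨ K k (n+1) = -1) := by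
  rw [IsSolution, M_replicate, pow_mat, neg_one_fin_two, Matrix.one_fin_two,
    fin2_iff, fin2_iff]
  constructor
  · rintro (⟨h1,h2,h3,h4⟩|⟨h1,h2,h3,h4⟩)
    · exact ⟨h3, Or.inl h1⟩
    · exact ⟨h3, Or.inr h1⟩
  · rintro ⟨h0, (h1|h1)⟩
    · exact Or.inl ⟨h1, by rw [h0]; ring, h0, by rw [h0, h1]; ring⟩
    · exact Or.inr ⟨h1, by rw [h0]; ring, h0, by rw [h0, h1]; ring⟩

lemma K_det (k : ZMod N) (n : ℕ) :
    K k (n+1) * K k (n+1) - K k (n+2) * K k n = 1 := by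
  induction n with
  | zero => rw [K_rec, K_zero, K_one]; ring
  | succ n ih =>
    rw [K_rec k (n+1)]
    have hr : K k (n+2) = k * K k (n+1) - K k n := K_rec k n
    linear_combination ih + K k (n+2) * hr

end Infra
section Part2
variable {N : ℕ}

lemma M_sandwich (x y : ZMod N) (l : List (ZMod N)) :
    M (x :: (l ++ [y])) = mat y * M l * mat x := by
  simp [M, List.reverse_cons, List.reverse_append, List.map_append, List.prod_append,
    mul_assoc]

lemma sol_quasi (k : ZMod N) (i : ℕ) (ε : ZMod N) (hε : ε = 1 ∨ ε = -1)
    (h : K k (i+1) = ε) :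
    IsSolution (ε * K k i :: (List.replicate (i+1) k ++ [ε * K k i])) := by
  have hε2 : ε * ε = 1 := by rcases hε with rfl | rfl <;> ring
  have hid : K k i * K k i = ε * (k * K k i) := by
    cases i with
    | zero =>
      rw [K_zero]
      have hk : k = ε := by rw [← K_one k, h]
      rw [hk]; linear_combination -hε2
    | succ n =>
      have hd := K_det k n
      rw [h] at hd
      have hr : K k n = k * K k (n+1) - K k (n+2) := by rw [K_rec]; ring
      rw [h] at hr
      linear_combination hd + ε * hr - hε2
  have key : M (ε * K k i :: (List.replicate (i+1) k ++ [ε * K k i]))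
      = !![-ε, 0; 0, -ε] := by
    rw [M_sandwich, M_replicate, pow_mat, h, mat, Matrix.mul_fin_two, Matrix.mul_fin_two]
    refine fin2_eq ?_ ?_ ?_ ?_
    · linear_combination (ε * K k i * K k i - k * K k i) * hε2 - ε * hid
    · linear_combination (-(K k i)) * hε2
    · linear_combination (K k i) * hε2
    · ring
  rcases hε with rfl | rfl
  · right; rw [key, neg_one_fin_two]
  · left; rw [key, Matrix.one_fin_two]; norm_num

lemma osum_eq (k x : ZMod N) (s j : ℕ) :
    osum ((k - x) :: (List.replicate s k ++ [k - x])) (x :: (List.replicate j k ++ [x]))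
      = List.replicate (s + j + 2) k := by
  have h1 : (x :: (List.replicate j k ++ [x])).getLastD 0 = x := by
    rw [← List.cons_append, List.getLastD_concat]
  have h1u : (((k - x) :: (List.replicate s k ++ [k - x])) : List (ZMod N)).getLastD 0
      = k - x := by
    rw [← List.cons_append, List.getLastD_concat]
  rw [osum, h1, h1u]
  simp only [List.headI_cons, List.drop_succ_cons, List.drop_zero, List.dropLast_concat]
  have e1 : k - x + x = k := by ring
  rw [e1]
  have : (k :: (List.replicate s k ++ k :: List.replicate j k) : List (ZMod N))
      = List.replicate (s+1) k ++ List.replicate (j+1) k := by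
    simp [List.replicate_succ, List.cons_append]
  rw [this, ← List.replicate_add]
  congr 1
  omega

lemma exists_sol (hN2 : 2 ≤ N) (k : ZMod N) :
    ∃ n, 0 < n ∧ IsSolution (List.replicate n k) := by
  haveI : NeZero N := ⟨by omega⟩
  have h1 : mat k * !![0,1;-1,k] = 1 := by
    rw [mat, Matrix.mul_fin_two, Matrix.one_fin_two]
    exact fin2_eq (by ring) (by ring) (by ring) (by ring)
  have h2 : !![0,1;-1,k] * mat k = 1 := by
    rw [mat, Matrix.mul_fin_two, Matrix.one_fin_two]
    exact fin2_eq (by ring) (by ring) (by ring) (by ring)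
  let u : (Matrix (Fin 2) (Fin 2) (ZMod N))ˣ := ⟨mat k, !![0,1;-1,k], h1, h2⟩
  refine ⟨orderOf u, orderOf_pos u, Or.inl ?_⟩
  rw [M_replicate]
  have : mat k ^ orderOf u = ((u ^ orderOf u : (Matrix (Fin 2) (Fin 2) (ZMod N))ˣ) :
      Matrix (Fin 2) (Fin 2) (ZMod N)) := by
    rw [Units.val_pow_eq_pow_val]
  rw [this, pow_orderOf_eq_one, Units.val_one]

lemma core (hN2 : 2 ≤ N) (hmi : MonomiallyIrreducible N) (k : ZMod N) (hk : k ≠ 0)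
    (j : ℕ) (hj : 1 ≤ j) (ε : ZMod N) (hε : ε = 1 ∨ ε = -1) (hKj : K k j = ε)
    (hsmall : ∀ d, 0 < d → d < j + 3 → ¬ IsSolution (List.replicate d k)) : False := by
  obtain ⟨n₀, hn₀, hs₀⟩ := exists_sol hN2 k
  have hmem : monomialMinimalSize N k ∈
      {n | 0 < n ∧ IsSolution (List.replicate n k)} := Nat.sInf_mem ⟨n₀, hn₀, hs₀⟩
  set n := monomialMinimalSize N k with hn
  obtain ⟨hnpos, hnsol⟩ := hmem
  have hbig : j + 3 ≤ n := by
    by_contra hlt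
    exact hsmall n hnpos (by omega) hnsol
  obtain ⟨-, hnred, -⟩ := hmi k hk
  apply hnred
  obtain ⟨i, rfl⟩ : ∃ i, j = i + 1 := ⟨j - 1, by omega⟩
  refine ⟨(k - ε * K k i) :: (List.replicate (n - (i + 3)) k ++ [k - ε * K k i]),
    ε * K k i :: (List.replicate (i+1) k ++ [ε * K k i]), ?_, ?_,
    sol_quasi k i ε hε hKj, Or.inl ⟨0, ?_⟩⟩
  · simp only [List.length_cons, List.length_append, List.length_replicate,
      List.length_singleton]
    omega
  · simp only [List.length_cons, List.length_append, List.length_replicate,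
      List.length_singleton]
    omega
  · rw [List.rotate_zero, osum_eq]
    congr 1
    omega

end Part2

section Part3

lemma K_hom {N M₀ : ℕ} (f : ZMod N →+* ZMod M₀) (k : ZMod N) (n : ℕ) :
    f (K k n) = K (f k) n := by
  have H : ∀ m, f (K k m) = K (f k) m ∧ f (K k (m+1)) = K (f k) (m+1) := by
    intro m
    induction m with
    | zero => exact ⟨by rw [K_zero, K_zero, map_one], by rw [K_one, K_one]⟩
    | succ m ih =>
      refine ⟨ih.2, ?_⟩
      rw [K_rec, K_rec, map_sub, map_mul, ih.1, ih.2]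
  exact (H n).1

lemma K_period {N : ℕ} (x : ZMod N) (T : ℕ) (hT : 0 < T)
    (h : ∀ i, K x (i + T) = K x i) (i : ℕ) : K x i = K x (i % T) := by
  induction i using Nat.strong_induction_on with
  | _ i ih =>
    by_cases hi : i < T
    · rw [Nat.mod_eq_of_lt hi]
    · have hTle : T ≤ i := le_of_not_gt hi
      calc K x i = K x (i - T + T) := by rw [Nat.sub_add_cancel hTle]
        _ = K x (i - T) := h _
        _ = K x ((i - T) % T) := ih _ (by omega)
        _ = K x (i % T) := by
            congr 1
            conv_rhs => rw [← Nat.sub_add_cancel hTle, Nat.add_mod_right]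

section Values
variable {m : ℕ}

lemma Kone2 : K (1 : ZMod m) 2 = 0 := by rw [show (2:ℕ) = 0+2 from rfl, K_rec, K_zero, K_one]; ring
lemma Kone3 : K (1 : ZMod m) 3 = -1 := by rw [show (3:ℕ) = 1+2 from rfl, K_rec, Kone2, K_one]; ring
lemma Kone4 : K (1 : ZMod m) 4 = -1 := by rw [show (4:ℕ) = 2+2 from rfl, K_rec, Kone3, Kone2]; ring
lemma Kone5 : K (1 : ZMod m) 5 = 0 := by rw [show (5:ℕ) = 3+2 from rfl, K_rec, Kone4, Kone3]; ring
lemma Kone6 : K (1 : ZMod m) 6 = 1 := by rw [show (6:ℕ) = 4+2 from rfl, K_rec, Kone5, Kone4]; ring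
lemma Kone7 : K (1 : ZMod m) 7 = 1 := by rw [show (7:ℕ) = 5+2 from rfl, K_rec, Kone6, Kone5]; ring


lemma K_period_of_two {N : ℕ} (x : ZMod N) (T : ℕ)
    (h0 : K x T = K x 0) (h1 : K x (T+1) = K x 1) : ∀ i, K x (i + T) = K x i := by
  intro i
  induction i using Nat.strong_induction_on with
  | _ i ih =>
    rcases i with _ | i
    · simpa using h0
    rcases i with _ | n
    · rw [show 1 + T = T + 1 from by omega]; exact h1
    · rw [show n + 1 + 1 + T = (n + T) + 2 from by omega, K_rec x (n + T),
        show n + 1 + 1 = n + 2 from by omega, K_rec x n,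
        show n + T + 1 = (n + 1) + T from by omega,
        ih (n+1) (by omega), ih n (by omega)]

lemma Kone_period (i : ℕ) : K (1 : ZMod m) (i + 6) = K (1 : ZMod m) i :=
  K_period_of_two _ 6 (by rw [Kone6, K_zero]) (by rw [show (6:ℕ)+1 = 7 from rfl, Kone7, K_one]) i

lemma Kone_mod (i : ℕ) : K (1 : ZMod m) i = K (1 : ZMod m) (i % 6) :=
  K_period _ 6 (by norm_num) Kone_period i

lemma Kneg1_2 : K (-1 : ZMod m) 2 = 0 := by rw [show (2:ℕ) = 0+2 from rfl, K_rec, K_zero, K_one]; ring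
lemma Kneg1_3 : K (-1 : ZMod m) 3 = 1 := by rw [show (3:ℕ) = 1+2 from rfl, K_rec, Kneg1_2, K_one]; ring
lemma Kneg1_4 : K (-1 : ZMod m) 4 = -1 := by rw [show (4:ℕ) = 2+2 from rfl, K_rec, Kneg1_3, Kneg1_2]; ring

lemma Kneg1_period (i : ℕ) : K (-1 : ZMod m) (i + 3) = K (-1 : ZMod m) i :=
  K_period_of_two _ 3 (by rw [Kneg1_3, K_zero]) (by rw [show (3:ℕ)+1 = 4 from rfl, Kneg1_4, K_one]) i

lemma Kneg1_mod (i : ℕ) : K (-1 : ZMod m) i = K (-1 : ZMod m) (i % 3) :=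
  K_period _ 3 (by norm_num) Kneg1_period i

lemma Kneg2 (i : ℕ) : K (-2 : ZMod m) i = (-1)^i * ((i+1 : ℕ) : ZMod m) := by
  have H : ∀ n, (K (-2 : ZMod m) n = (-1)^n * ((n+1 : ℕ) : ZMod m) ∧
      K (-2 : ZMod m) (n+1) = (-1)^(n+1) * ((n+2 : ℕ) : ZMod m)) := by
    intro n
    induction n with
    | zero => exact ⟨by rw [K_zero]; push_cast; ring, by rw [K_one]; push_cast; ring⟩
    | succ n ih =>
      refine ⟨by rw [show n+1+1 = n+2 from rfl] at ih ⊢; exact ih.2, ?_⟩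
      rw [show n+1+1 = n+2 from rfl, K_rec, ih.1, ih.2]
      push_cast
      ring
  exact (H i).1

end Values

lemma crtCore {p m : ℕ} (hp : 2 < p) (hm : 2 < m) (hco : Nat.Coprime p m)
    (hmi : MonomiallyIrreducible (p * m))
    (k₀ : ZMod p) (k₁ : ZMod m) (hk01 : k₀ ≠ 0 ∨ k₁ ≠ 0)
    (j : ℕ) (hj : 1 ≤ j) (ε : ℤ) (hε : ε = 1 ∨ ε = -1)
    (h1p : K k₀ j = (ε : ZMod p)) (h1m : K k₁ j = (ε : ZMod m))
    (h4 : ∀ d, 0 < d → d < j + 3 → ∀ μ : ℤ, (μ = 1 ∨ μ = -1) →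
      ¬(K k₀ (d-1) = 0 ∧ K k₀ d = (μ : ZMod p) ∧ K k₁ (d-1) = 0 ∧ K k₁ d = (μ : ZMod m))) :
    False := by
  haveI : NeZero p := ⟨by omega⟩
  haveI : NeZero m := ⟨by omega⟩
  haveI : NeZero (p * m) := ⟨by positivity⟩
  set f : ZMod (p * m) →+* ZMod p := ZMod.castHom (dvd_mul_right p m) (ZMod p) with hf
  set g : ZMod (p * m) →+* ZMod m := ZMod.castHom (dvd_mul_left m p) (ZMod m) with hg
  have hinj : ∀ z : ZMod (p * m), f z = 0 → g z = 0 → z = 0 := by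
    intro z h1 h2
    have hv1 : ((z.val : ℕ) : ZMod p) = 0 := by
      rw [ZMod.natCast_val]
      exact h1
    have hv2 : ((z.val : ℕ) : ZMod m) = 0 := by
      rw [ZMod.natCast_val]
      exact h2
    rw [ZMod.natCast_eq_zero_iff] at hv1 hv2
    have : (p * m) ∣ z.val := Nat.Coprime.mul_dvd_of_dvd_of_dvd hco hv1 hv2
    have hz : ((z.val : ℕ) : ZMod (p * m)) = 0 := (ZMod.natCast_eq_zero_iff _ _).mpr this
    rwa [ZMod.natCast_val, ZMod.cast_id] at hz
  have hinj2 : ∀ z w : ZMod (p * m), f z = f w → g z = g w → z = w := by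
    intro z w h1 h2
    have := hinj (z - w) (by rw [map_sub, h1, sub_self]) (by rw [map_sub, h2, sub_self])
    exact sub_eq_zero.mp this
  obtain ⟨c, hc1, hc2⟩ := Nat.chineseRemainder hco k₀.val k₁.val
  set k : ZMod (p * m) := ((c : ℕ) : ZMod (p * m)) with hkdef
  have hfk : f k = k₀ := by
    rw [hkdef, map_natCast, (ZMod.natCast_eq_natCast_iff _ _ _).mpr hc1, ZMod.natCast_val,
      ZMod.cast_id]
  have hgk : g k = k₁ := by
    rw [hkdef, map_natCast, (ZMod.natCast_eq_natCast_iff _ _ _).mpr hc2, ZMod.natCast_val,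
      ZMod.cast_id]
  have hfK : ∀ n, f (K k n) = K k₀ n := fun n => by rw [K_hom, hfk]
  have hgK : ∀ n, g (K k n) = K k₁ n := fun n => by rw [K_hom, hgk]
  have hkne : k ≠ 0 := by
    intro h0
    rcases hk01 with h | h
    · exact h (by rw [← hfk, h0, map_zero])
    · exact h (by rw [← hgk, h0, map_zero])
  have hN2 : 2 ≤ p * m := by
    calc 2 ≤ p := by omega
    _ = p * 1 := (mul_one p).symm
    _ ≤ p * m := Nat.mul_le_mul_left p (by omega)
  refine core hN2 hmi k hkne j hj ((ε : ℤ) : ZMod (p * m)) ?_ ?_ ?_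
  · rcases hε with rfl | rfl
    · left; push_cast; ring
    · right; push_cast; ring
  · refine hinj2 _ _ ?_ ?_
    · rw [hfK, map_intCast]; exact h1p
    · rw [hgK, map_intCast]; exact h1m
  · intro d hd0 hdlt hsol
    obtain ⟨d', rfl⟩ : ∃ d', d = d' + 1 := ⟨d - 1, by omega⟩
    rw [isSolution_replicate_iff] at hsol
    obtain ⟨hz, h1⟩ := hsol
    have c1 : K k₀ d' = 0 := by rw [← hfK, hz, map_zero]
    have c3 : K k₁ d' = 0 := by rw [← hgK, hz, map_zero]
    have hd1 : (d' + 1) - 1 = d' := by omega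
    rcases h1 with h1 | h1
    · refine h4 (d'+1) hd0 hdlt 1 (Or.inl rfl) ?_
      rw [hd1]
      refine ⟨c1, ?_, c3, ?_⟩
      · rw [← hfK, h1]; simp
      · rw [← hgK, h1]; simp
    · refine h4 (d'+1) hd0 hdlt (-1) (Or.inr rfl) ?_
      rw [hd1]
      refine ⟨c1, ?_, c3, ?_⟩
      · rw [← hfK, h1]; simp
      · rw [← hgK, h1]; simp

end Part3

section Part4

lemma mech_gold {p m : ℕ} (hp : 2 < p) (hm : 2 < m) (hco : Nat.Coprime p m)
    (hmi : MonomiallyIrreducible (p * m)) (x : ZMod p) (hx : x * x = 1 - x) : False := by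
  haveI : Fact (1 < p) := ⟨by omega⟩
  haveI : Fact (2 < p) := ⟨hp⟩
  haveI : Fact (1 < m) := ⟨by omega⟩
  haveI : Fact (2 < m) := ⟨hm⟩
  have hx0 : x ≠ 0 := by
    intro h0
    rw [h0] at hx
    simp only [mul_zero, sub_zero] at hx
    exact one_ne_zero hx.symm
  have v2 : K x 2 = -x := by
    rw [show (2:ℕ)=0+2 from rfl, K_rec, K_zero, K_one]; linear_combination hx
  have v3 : K x 3 = -1 := by
    rw [show (3:ℕ)=1+2 from rfl, K_rec, v2, K_one]; linear_combination -hx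
  have v4 : K x 4 = 0 := by rw [show (4:ℕ)=2+2 from rfl, K_rec, v3, v2]; ring
  have v5 : K x 5 = 1 := by rw [show (5:ℕ)=3+2 from rfl, K_rec, v4, v3]; ring
  have v6 : K x 6 = x := by rw [show (6:ℕ)=4+2 from rfl, K_rec, v5, v4]; ring
  have hper := K_period_of_two x 5 (by rw [v5, K_zero])
    (by rw [show (5:ℕ)+1=6 from rfl, v6, K_one])
  have hmod : ∀ i, K x i = K x (i % 5) := K_period x 5 (by norm_num) hper
  refine crtCore hp hm hco hmi x 1 (Or.inl hx0) 25 (by norm_num) 1 (Or.inl rfl) ?_ ?_ ?_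
  · rw [hmod 25, show 25 % 5 = 0 from by norm_num, K_zero]; simp
  · rw [Kone_mod 25, show 25 % 6 = 1 from by norm_num, K_one]; simp
  · rintro d hd0 hdlt μ hμ ⟨c1, c2, c3, c4⟩
    rw [hmod (d-1)] at c1
    have h5 : (d-1) % 5 = 4 := by
      have h' : (d-1) % 5 = 0 ∨ (d-1) % 5 = 1 ∨ (d-1) % 5 = 2 ∨ (d-1) % 5 = 3 ∨
          (d-1) % 5 = 4 := by omega
      rcases h' with h|h|h|h|h <;> rw [h] at c1
      · exact absurd c1 (by rw [K_zero]; exact one_ne_zero)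
      · exact absurd c1 (by rw [K_one]; exact hx0)
      · exact absurd c1 (by rw [v2]; exact neg_ne_zero.mpr hx0)
      · exact absurd c1 (by rw [v3]; exact neg_ne_zero.mpr one_ne_zero)
      · exact h
    rw [Kone_mod (d-1)] at c3
    have h6 : (d-1) % 6 = 2 ∨ (d-1) % 6 = 5 := by
      have h' : (d-1) % 6 = 0 ∨ (d-1) % 6 = 1 ∨ (d-1) % 6 = 2 ∨ (d-1) % 6 = 3 ∨
          (d-1) % 6 = 4 ∨ (d-1) % 6 = 5 := by omega
      rcases h' with h|h|h|h|h|h <;> rw [h] at c3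
      · exact absurd c3 (by rw [K_zero]; exact one_ne_zero)
      · exact absurd c3 (by rw [K_one]; exact one_ne_zero)
      · exact Or.inl h
      · exact absurd c3 (by rw [Kone3]; exact neg_ne_zero.mpr one_ne_zero)
      · exact absurd c3 (by rw [Kone4]; exact neg_ne_zero.mpr one_ne_zero)
      · exact Or.inr h
    have hd15 : d = 15 := by omega
    subst hd15
    rw [hmod 15, show 15 % 5 = 0 from by norm_num, K_zero] at c2
    rw [Kone_mod 15, show 15 % 6 = 3 from by norm_num, Kone3] at c4
    rcases hμ with rfl | rfl
    · rw [Int.cast_one] at c4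
      exact ZMod.neg_one_ne_one c4
    · rw [Int.cast_neg, Int.cast_one] at c2
      exact ZMod.neg_one_ne_one c2.symm

lemma mech_sqrt2 {p m : ℕ} (hp : 2 < p) (hm : 2 < m) (hco : Nat.Coprime p m)
    (hmi : MonomiallyIrreducible (p * m)) (h2 : (2 : ZMod p) ≠ 0)
    (x : ZMod p) (hx : x * x = 2) : False := by
  haveI : Fact (1 < p) := ⟨by omega⟩
  haveI : Fact (2 < p) := ⟨hp⟩
  haveI : Fact (1 < m) := ⟨by omega⟩
  haveI : Fact (2 < m) := ⟨hm⟩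
  have hx0 : x ≠ 0 := by
    intro h0
    rw [h0, mul_zero] at hx
    exact h2 hx.symm
  have v2 : K x 2 = 1 := by
    rw [show (2:ℕ)=0+2 from rfl, K_rec, K_zero, K_one]; linear_combination hx
  have v3 : K x 3 = 0 := by rw [show (3:ℕ)=1+2 from rfl, K_rec, v2, K_one]; ring
  have v4 : K x 4 = -1 := by rw [show (4:ℕ)=2+2 from rfl, K_rec, v3, v2]; ring
  have v5 : K x 5 = -x := by rw [show (5:ℕ)=3+2 from rfl, K_rec, v4, v3]; ring
  have v6 : K x 6 = -1 := by
    rw [show (6:ℕ)=4+2 from rfl, K_rec, v5, v4]; linear_combination -hx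
  have v7 : K x 7 = 0 := by rw [show (7:ℕ)=5+2 from rfl, K_rec, v6, v5]; ring
  have v8 : K x 8 = 1 := by rw [show (8:ℕ)=6+2 from rfl, K_rec, v7, v6]; ring
  have v9 : K x 9 = x := by rw [show (9:ℕ)=7+2 from rfl, K_rec, v8, v7]; ring
  have hper := K_period_of_two x 8 (by rw [v8, K_zero])
    (by rw [show (8:ℕ)+1=9 from rfl, v9, K_one])
  have hmod : ∀ i, K x i = K x (i % 8) := K_period x 8 (by norm_num) hper
  refine crtCore hp hm hco hmi x 1 (Or.inl hx0) 18 (by norm_num) 1 (Or.inl rfl) ?_ ?_ ?_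
  · rw [hmod 18, show 18 % 8 = 2 from by norm_num, v2]; simp
  · rw [Kone_mod 18, show 18 % 6 = 0 from by norm_num, K_zero]; simp
  · rintro d hd0 hdlt μ hμ ⟨c1, c2, c3, c4⟩
    rw [hmod (d-1)] at c1
    have h8 : (d-1) % 8 = 3 ∨ (d-1) % 8 = 7 := by
      have h' : (d-1) % 8 = 0 ∨ (d-1) % 8 = 1 ∨ (d-1) % 8 = 2 ∨ (d-1) % 8 = 3 ∨
          (d-1) % 8 = 4 ∨ (d-1) % 8 = 5 ∨ (d-1) % 8 = 6 ∨ (d-1) % 8 = 7 := by omega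
      rcases h' with h|h|h|h|h|h|h|h <;> rw [h] at c1
      · exact absurd c1 (by rw [K_zero]; exact one_ne_zero)
      · exact absurd c1 (by rw [K_one]; exact hx0)
      · exact absurd c1 (by rw [v2]; exact one_ne_zero)
      · exact Or.inl h
      · exact absurd c1 (by rw [v4]; exact neg_ne_zero.mpr one_ne_zero)
      · exact absurd c1 (by rw [v5]; exact neg_ne_zero.mpr hx0)
      · exact absurd c1 (by rw [v6]; exact neg_ne_zero.mpr one_ne_zero)
      · exact Or.inr h
    rw [Kone_mod (d-1)] at c3
    have h6 : (d-1) % 6 = 2 ∨ (d-1) % 6 = 5 := by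
      have h' : (d-1) % 6 = 0 ∨ (d-1) % 6 = 1 ∨ (d-1) % 6 = 2 ∨ (d-1) % 6 = 3 ∨
          (d-1) % 6 = 4 ∨ (d-1) % 6 = 5 := by omega
      rcases h' with h|h|h|h|h|h <;> rw [h] at c3
      · exact absurd c3 (by rw [K_zero]; exact one_ne_zero)
      · exact absurd c3 (by rw [K_one]; exact one_ne_zero)
      · exact Or.inl h
      · exact absurd c3 (by rw [Kone3]; exact neg_ne_zero.mpr one_ne_zero)
      · exact absurd c3 (by rw [Kone4]; exact neg_ne_zero.mpr one_ne_zero)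
      · exact Or.inr h
    have hd12 : d = 12 := by omega
    subst hd12
    rw [hmod 12, show 12 % 8 = 4 from by norm_num, v4] at c2
    rw [Kone_mod 12, show 12 % 6 = 0 from by norm_num, K_zero] at c4
    rcases hμ with rfl | rfl
    · rw [Int.cast_one] at c2
      exact ZMod.neg_one_ne_one c2
    · rw [Int.cast_neg, Int.cast_one] at c4
      exact ZMod.neg_one_ne_one c4.symm

end Part4

section Part5

lemma mech1 {p m : ℕ} (hp : 2 < p) (hm : 2 < m) (hco : Nat.Coprime p m)
    (hmi : MonomiallyIrreducible (p * m)) (k₀ : ZMod p) (j : ℕ) (hj : 1 ≤ j) (ε : ℤ)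
    (hjε : ((j % 6 = 0 ∨ j % 6 = 1) ∧ ε = 1) ∨ ((j % 6 = 3 ∨ j % 6 = 4) ∧ ε = -1))
    (h1p : K k₀ j = (ε : ZMod p))
    (h4p : ∀ d, d < j + 3 → 0 < d → d % 3 = 0 →
      ¬(K k₀ (d-1) = 0 ∧ K k₀ d = ((if d % 6 = 0 then 1 else -1 : ℤ) : ZMod p))) :
    False := by
  haveI : Fact (1 < m) := ⟨by omega⟩
  haveI : Fact (2 < m) := ⟨hm⟩
  have hε : ε = 1 ∨ ε = -1 := by rcases hjε with ⟨-, h⟩ | ⟨-, h⟩ <;> [left; right] <;> exact h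
  refine crtCore hp hm hco hmi k₀ 1 (Or.inr one_ne_zero) j hj ε hε h1p ?_ ?_
  · rw [Kone_mod j]
    rcases hjε with ⟨h | h, rfl⟩ | ⟨h | h, rfl⟩ <;> rw [h]
    · rw [K_zero]; simp
    · rw [K_one]; simp
    · rw [Kone3]; simp
    · rw [Kone4]; simp
  · rintro d hd0 hdlt μ hμ ⟨c1, c2, c3, c4⟩
    rw [Kone_mod (d-1)] at c3
    have h6 : (d-1) % 6 = 2 ∨ (d-1) % 6 = 5 := by
      have h' : (d-1) % 6 = 0 ∨ (d-1) % 6 = 1 ∨ (d-1) % 6 = 2 ∨ (d-1) % 6 = 3 ∨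
          (d-1) % 6 = 4 ∨ (d-1) % 6 = 5 := by omega
      rcases h' with h|h|h|h|h|h <;> rw [h] at c3
      · exact absurd c3 (by rw [K_zero]; exact one_ne_zero)
      · exact absurd c3 (by rw [K_one]; exact one_ne_zero)
      · exact Or.inl h
      · exact absurd c3 (by rw [Kone3]; exact neg_ne_zero.mpr one_ne_zero)
      · exact absurd c3 (by rw [Kone4]; exact neg_ne_zero.mpr one_ne_zero)
      · exact Or.inr h
    have hd3 : d % 3 = 0 := by omega
    have hd6 : d % 6 = 0 ∨ d % 6 = 3 := by omega
    rw [Kone_mod d] at c4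
    have hμval : μ = (if d % 6 = 0 then 1 else -1 : ℤ) := by
      rcases hd6 with h | h <;> rw [h] at c4 ⊢
      · rw [K_zero] at c4
        simp only [if_pos rfl]
        rcases hμ with rfl | rfl
        · rfl
        · rw [Int.cast_neg, Int.cast_one] at c4
          exact absurd c4.symm ZMod.neg_one_ne_one
      · rw [Kone3] at c4
        norm_num
        rcases hμ with rfl | rfl
        · rw [Int.cast_one] at c4
          exact absurd c4 ZMod.neg_one_ne_one
        · rfl
    exact h4p d (by omega) hd0 hd3 ⟨c1, by rw [← hμval]; exact c2⟩

lemma mech_three {m : ℕ} (hm : 2 < m) (hmodd : Odd m) (hco : Nat.Coprime 3 m)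
    (hmi : MonomiallyIrreducible (3 * m)) : False := by
  haveI : Fact (1 < m) := ⟨by omega⟩
  haveI : Fact (2 < m) := ⟨hm⟩
  have h3m : m % 3 = 1 ∨ m % 3 = 2 := by
    have : ¬ (3 ∣ m) := (Nat.Prime.coprime_iff_not_dvd (by norm_num)).mp hco
    omega
  set j : ℕ := if m % 3 = 1 then m else 5 * m with hjdef
  have hj3 : j % 3 = 1 := by
    rcases h3m with h | h
    · rw [hjdef, if_pos h]; omega
    · rw [hjdef, if_neg (by omega)]; omega
  have hjodd : Odd j := by
    rcases h3m with h | h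
    · rw [hjdef, if_pos h]; exact hmodd
    · rw [hjdef, if_neg (by omega)]; exact Odd.mul (Nat.odd_iff.mpr (by norm_num)) hmodd
  have hjle : j ≤ 5 * m := by
    rcases h3m with h | h
    · rw [hjdef, if_pos h]; omega
    · rw [hjdef, if_neg (by omega)]
  have hj1 : 1 ≤ j := by
    rcases h3m with h | h
    · rw [hjdef, if_pos h]; omega
    · rw [hjdef, if_neg (by omega)]; omega
  refine crtCore (by norm_num) hm hco hmi (-1 : ZMod 3) (-2 : ZMod m)
    (Or.inl (by decide)) j hj1 (-1) (Or.inr rfl) ?_ ?_ ?_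
  · rw [Kneg1_mod j, hj3, K_one]; simp
  · rw [Kneg2 j, Odd.neg_one_pow hjodd]
    have hj1m : ((j + 1 : ℕ) : ZMod m) = 1 := by
      rcases h3m with h | h
      · rw [hjdef, if_pos h]; push_cast; simp [ZMod.natCast_self]
      · rw [hjdef, if_neg (by omega)]; push_cast; simp [ZMod.natCast_self]
    rw [hj1m]; simp
  · rintro d hd0 hdlt μ hμ ⟨c1, c2, c3, c4⟩
    -- mod 3 side : 3 ∣ d
    rw [Kneg1_mod (d-1)] at c1
    have h3d : d % 3 = 0 := by
      have h' : (d-1) % 3 = 0 ∨ (d-1) % 3 = 1 ∨ (d-1) % 3 = 2 := by omega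
      rcases h' with h|h|h <;> rw [h] at c1
      · exact absurd c1 (by rw [K_zero]; exact one_ne_zero)
      · exact absurd c1 (by rw [K_one]; decide)
      · omega
    -- mod m side : m ∣ d
    have hmd : m ∣ d := by
      rw [Kneg2 (d-1), show (d-1)+1 = d from by omega] at c3
      have hd0' : ((d : ℕ) : ZMod m) = 0 := by
        rcases Nat.even_or_odd (d-1) with he | ho
        · rwa [Even.neg_one_pow he, one_mul] at c3
        · rw [Odd.neg_one_pow ho, neg_one_mul, neg_eq_zero] at c3; exact c3
      exact (ZMod.natCast_eq_zero_iff _ _).mp hd0'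
    have h3dvd : 3 ∣ d := by omega
    obtain ⟨t, rfl⟩ := Nat.Coprime.mul_dvd_of_dvd_of_dvd hco h3dvd hmd
    have ht0 : t ≠ 0 := by
      rintro rfl
      rw [mul_zero] at hd0
      omega
    have ht2 : t < 2 := by
      by_contra hge
      have hmul : 3 * m * 2 ≤ 3 * m * t := Nat.mul_le_mul_left _ (by omega)
      omega
    have ht1 : t = 1 := by omega
    subst ht1
    rw [mul_one] at c2 c4
    rw [Kneg1_mod (3*m), show (3*m) % 3 = 0 from by omega, K_zero] at c2
    have hodd3m : Odd (3*m) := Odd.mul (Nat.odd_iff.mpr (by norm_num)) hmodd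
    rw [Kneg2 (3*m), Odd.neg_one_pow hodd3m] at c4
    have h3m1 : ((3*m + 1 : ℕ) : ZMod m) = 1 := by
      push_cast
      simp [ZMod.natCast_self]
    rw [h3m1, mul_one] at c4
    haveI : Fact (2 < 3) := ⟨by norm_num⟩
    rcases hμ with rfl | rfl
    · rw [Int.cast_one] at c4
      exact ZMod.neg_one_ne_one c4
    · rw [Int.cast_neg, Int.cast_one] at c2
      exact ZMod.neg_one_ne_one c2.symm

lemma sqfree_case {N p : ℕ} (hN2 : 2 ≤ N) (hNodd : Odd N) (hp : p.Prime) (hpp : p * p ∣ N)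
    (hmi : MonomiallyIrreducible N) : False := by
  haveI : NeZero N := ⟨by omega⟩
  haveI : Fact (1 < N) := ⟨by omega⟩
  obtain ⟨t, hNt⟩ := hpp
  have ht0 : t ≠ 0 := by rintro rfl; omega
  set k : ZMod N := ((p * t : ℕ) : ZMod N) with hkdef
  have hk2 : k * k = 0 := by
    rw [hkdef, ← Nat.cast_mul]
    have he : (p * t) * (p * t) = N * t := by rw [hNt]; ring
    rw [he, Nat.cast_mul, ZMod.natCast_self, zero_mul]
  have hkne : k ≠ 0 := by
    rw [hkdef, Ne, ZMod.natCast_eq_zero_iff]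
    intro hdvd
    have htpos : 0 < t := Nat.pos_of_ne_zero ht0
    have hp2 : 2 ≤ p := hp.two_le
    have hlt : p * t < N := by
      rw [hNt]
      nlinarith
    have hpos : 0 < p * t := Nat.mul_pos (by omega) htpos
    have := Nat.le_of_dvd hpos hdvd
    omega
  have hK2 : K k 2 = -1 := by
    rw [show (2:ℕ)=0+2 from rfl, K_rec, K_zero, K_one, hk2]; ring
  refine core hN2 hmi k hkne 2 (by norm_num) (-1) (Or.inr rfl) hK2 ?_
  intro d hd0 hdlt hsol
  obtain ⟨d', rfl⟩ : ∃ d', d = d' + 1 := ⟨d - 1, by omega⟩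
  rw [isSolution_replicate_iff] at hsol
  obtain ⟨hz, -⟩ := hsol
  have hd4 : d' < 4 := by omega
  interval_cases d'
  · rw [K_zero] at hz; exact one_ne_zero hz
  · rw [K_one] at hz; exact hkne hz
  · rw [hK2] at hz; exact one_ne_zero (neg_eq_zero.mp hz)
  · rw [show (3:ℕ)=1+2 from rfl, K_rec, hK2, K_one] at hz
    have h2k : k + k = 0 := by linear_combination -hz
    have hu : IsUnit (2 : ZMod N) := by
      rw [show ((2 : ZMod N)) = ((2 : ℕ) : ZMod N) from by push_cast; ring,
        ZMod.isUnit_iff_coprime]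
      exact Nat.coprime_two_left.mpr hNodd
    have : (2 : ZMod N) * k = 0 := by linear_combination h2k
    rcases hu with ⟨v, hv⟩
    rw [← hv] at this
    exact hkne ((Units.mul_right_eq_zero v).mp this)

end Part5

def goodList : List ℕ := [3, 13, 37, 43, 53, 67, 83, 157, 197, 227, 293, 307, 373, 397,
  443, 467, 547, 587, 643, 677, 683, 757, 797, 827, 853, 883, 947,
  107, 163, 173, 277, 283, 317, 347, 523, 557, 563, 613,
  653, 733, 773, 787, 877, 907, 997]

lemma enum : ∀ p, p < 1001 →
    ((p % 40 = 3 ∨ p % 40 = 13 ∨ p % 40 = 27 ∨ p % 40 = 37) ∧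
      (∀ d, d < 32 → 1 < d → d ≠ p → ¬ d ∣ p)) → p ∈ goodList := by decide

lemma bad13 {m : ℕ} (hm : 2 < m) (hco : Nat.Coprime 13 m)
    (hmi : MonomiallyIrreducible (13 * m)) : False :=
  mech1 (by norm_num) hm hco hmi (7 : ZMod 13) 7 (by norm_num) (1) (by decide)
    (by decide) (by decide)

lemma bad37 {m : ℕ} (hm : 2 < m) (hco : Nat.Coprime 37 m)
    (hmi : MonomiallyIrreducible (37 * m)) : False :=
  mech1 (by norm_num) hm hco hmi (7 : ZMod 37) 19 (by norm_num) (1) (by decide)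
    (by decide) (by decide)

lemma bad43 {m : ℕ} (hm : 2 < m) (hco : Nat.Coprime 43 m)
    (hmi : MonomiallyIrreducible (43 * m)) : False :=
  mech1 (by norm_num) hm hco hmi (8 : ZMod 43) 7 (by norm_num) (1) (by decide)
    (by decide) (by decide)

lemma bad53 {m : ℕ} (hm : 2 < m) (hco : Nat.Coprime 53 m)
    (hmi : MonomiallyIrreducible (53 * m)) : False :=
  mech1 (by norm_num) hm hco hmi (8 : ZMod 53) 13 (by norm_num) (1) (by decide)
    (by decide) (by decide)

lemma bad67 {m : ℕ} (hm : 2 < m) (hco : Nat.Coprime 67 m)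
    (hmi : MonomiallyIrreducible (67 * m)) : False :=
  mech1 (by norm_num) hm hco hmi (17 : ZMod 67) 9 (by norm_num) (-1) (by decide)
    (by decide) (by decide)

lemma bad83 {m : ℕ} (hm : 2 < m) (hco : Nat.Coprime 83 m)
    (hmi : MonomiallyIrreducible (83 * m)) : False :=
  mech1 (by norm_num) hm hco hmi (10 : ZMod 83) 7 (by norm_num) (1) (by decide)
    (by decide) (by decide)

lemma bad157 {m : ℕ} (hm : 2 < m) (hco : Nat.Coprime 157 m)
    (hmi : MonomiallyIrreducible (157 * m)) : False :=
  mech1 (by norm_num) hm hco hmi (35 : ZMod 157) 13 (by norm_num) (1) (by decide)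
    (by decide) (by decide)

lemma bad197 {m : ℕ} (hm : 2 < m) (hco : Nat.Coprime 197 m)
    (hmi : MonomiallyIrreducible (197 * m)) : False :=
  mech1 (by norm_num) hm hco hmi (95 : ZMod 197) 7 (by norm_num) (1) (by decide)
    (by decide) (by decide)

lemma bad227 {m : ℕ} (hm : 2 < m) (hco : Nat.Coprime 227 m)
    (hmi : MonomiallyIrreducible (227 * m)) : False :=
  mech1 (by norm_num) hm hco hmi (19 : ZMod 227) 19 (by norm_num) (1) (by decide)
    (by decide) (by decide)

lemma bad293 {m : ℕ} (hm : 2 < m) (hco : Nat.Coprime 293 m)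
    (hmi : MonomiallyIrreducible (293 * m)) : False :=
  mech1 (by norm_num) hm hco hmi (54 : ZMod 293) 7 (by norm_num) (1) (by decide)
    (by decide) (by decide)

lemma bad307 {m : ℕ} (hm : 2 < m) (hco : Nat.Coprime 307 m)
    (hmi : MonomiallyIrreducible (307 * m)) : False :=
  mech1 (by norm_num) hm hco hmi (63 : ZMod 307) 7 (by norm_num) (1) (by decide)
    (by decide) (by decide)

lemma bad373 {m : ℕ} (hm : 2 < m) (hco : Nat.Coprime 373 m)
    (hmi : MonomiallyIrreducible (373 * m)) : False :=
  mech1 (by norm_num) hm hco hmi (46 : ZMod 373) 9 (by norm_num) (-1) (by decide)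
    (by decide) (by decide)

lemma bad397 {m : ℕ} (hm : 2 < m) (hco : Nat.Coprime 397 m)
    (hmi : MonomiallyIrreducible (397 * m)) : False :=
  mech1 (by norm_num) hm hco hmi (95 : ZMod 397) 9 (by norm_num) (-1) (by decide)
    (by decide) (by decide)

lemma bad443 {m : ℕ} (hm : 2 < m) (hco : Nat.Coprime 443 m)
    (hmi : MonomiallyIrreducible (443 * m)) : False :=
  mech1 (by norm_num) hm hco hmi (11 : ZMod 443) 13 (by norm_num) (1) (by decide)
    (by decide) (by decide)

lemma bad467 {m : ℕ} (hm : 2 < m) (hco : Nat.Coprime 467 m)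
    (hmi : MonomiallyIrreducible (467 * m)) : False :=
  mech1 (by norm_num) hm hco hmi (21 : ZMod 467) 13 (by norm_num) (1) (by decide)
    (by decide) (by decide)

lemma bad547 {m : ℕ} (hm : 2 < m) (hco : Nat.Coprime 547 m)
    (hmi : MonomiallyIrreducible (547 * m)) : False :=
  mech1 (by norm_num) hm hco hmi (54 : ZMod 547) 7 (by norm_num) (1) (by decide)
    (by decide) (by decide)

lemma bad587 {m : ℕ} (hm : 2 < m) (hco : Nat.Coprime 587 m)
    (hmi : MonomiallyIrreducible (587 * m)) : False :=
  mech1 (by norm_num) hm hco hmi (204 : ZMod 587) 7 (by norm_num) (1) (by decide)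
    (by decide) (by decide)

lemma bad643 {m : ℕ} (hm : 2 < m) (hco : Nat.Coprime 643 m)
    (hmi : MonomiallyIrreducible (643 * m)) : False :=
  mech1 (by norm_num) hm hco hmi (20 : ZMod 643) 7 (by norm_num) (1) (by decide)
    (by decide) (by decide)

lemma bad677 {m : ℕ} (hm : 2 < m) (hco : Nat.Coprime 677 m)
    (hmi : MonomiallyIrreducible (677 * m)) : False :=
  mech1 (by norm_num) hm hco hmi (124 : ZMod 677) 13 (by norm_num) (1) (by decide)
    (by decide) (by decide)

lemma bad683 {m : ℕ} (hm : 2 < m) (hco : Nat.Coprime 683 m)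
    (hmi : MonomiallyIrreducible (683 * m)) : False :=
  mech1 (by norm_num) hm hco hmi (32 : ZMod 683) 9 (by norm_num) (-1) (by decide)
    (by decide) (by decide)

lemma bad757 {m : ℕ} (hm : 2 < m) (hco : Nat.Coprime 757 m)
    (hmi : MonomiallyIrreducible (757 * m)) : False :=
  mech1 (by norm_num) hm hco hmi (136 : ZMod 757) 7 (by norm_num) (1) (by decide)
    (by decide) (by decide)

lemma bad797 {m : ℕ} (hm : 2 < m) (hco : Nat.Coprime 797 m)
    (hmi : MonomiallyIrreducible (797 * m)) : False :=
  mech1 (by norm_num) hm hco hmi (100 : ZMod 797) 7 (by norm_num) (1) (by decide)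
    (by decide) (by decide)

lemma bad827 {m : ℕ} (hm : 2 < m) (hco : Nat.Coprime 827 m)
    (hmi : MonomiallyIrreducible (827 * m)) : False :=
  mech1 (by norm_num) hm hco hmi (63 : ZMod 827) 7 (by norm_num) (1) (by decide)
    (by decide) (by decide)

lemma bad853 {m : ℕ} (hm : 2 < m) (hco : Nat.Coprime 853 m)
    (hmi : MonomiallyIrreducible (853 * m)) : False :=
  mech1 (by norm_num) hm hco hmi (376 : ZMod 853) 7 (by norm_num) (1) (by decide)
    (by decide) (by decide)

lemma bad883 {m : ℕ} (hm : 2 < m) (hco : Nat.Coprime 883 m)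
    (hmi : MonomiallyIrreducible (883 * m)) : False :=
  mech1 (by norm_num) hm hco hmi (120 : ZMod 883) 7 (by norm_num) (1) (by decide)
    (by decide) (by decide)

lemma bad947 {m : ℕ} (hm : 2 < m) (hco : Nat.Coprime 947 m)
    (hmi : MonomiallyIrreducible (947 * m)) : False :=
  mech1 (by norm_num) hm hco hmi (129 : ZMod 947) 9 (by norm_num) (-1) (by decide)
    (by decide) (by decide)


lemma z5a : (5 : ZMod 5) = 0 * 0 := by decide
lemma z5b : ((((1:ℕ):ℤ)) : ZMod 5) ≠ 0 := by decide
lemma z5c : ((((1:ℕ):ℤ)) : ZMod 5) = 1 * 1 := by decide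
lemma z5d : ((((4:ℕ):ℤ)) : ZMod 5) ≠ 0 := by decide
lemma z5e : ((((4:ℕ):ℤ)) : ZMod 5) = 2 * 2 := by decide

theorem stmt2'
 (N : ℕ) (hN : 2 ≤ N) (hodd : Odd N) (hnp : ¬ N.Prime)
    (hmi : MonomiallyIrreducible N) :
    ∃ S : Finset ℕ, 2 ≤ S.card ∧ N = ∏ p ∈ S, p ∧
      ∀ p ∈ S, p.Prime ∧ Odd p ∧
        (p % 5 = 3 ∨ p % 5 = 2) ∧
        (p % 8 = 3 ∨ p % 8 = 5) ∧
        (p ≤ 1000 → p ∈ ({107, 163, 173, 277, 283, 317, 347, 523, 557, 563, 613,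
          653, 733, 773, 787, 877, 907, 997} : Finset ℕ)) := by
  have hsq : Squarefree N := by
    rw [Nat.squarefree_iff_prime_squarefree]
    intro x hx hdvd
    exact (sqfree_case hN hodd hx hdvd hmi).elim
  refine ⟨N.primeFactors, ?_, (Nat.prod_primeFactors_of_squarefree hsq).symm, ?_⟩
  · by_contra hcard
    push_neg at hcard
    have h01 : N.primeFactors.card = 0 ∨ N.primeFactors.card = 1 := by omega
    have hprod := Nat.prod_primeFactors_of_squarefree hsq
    rcases h01 with h | h
    · rw [Finset.card_eq_zero.mp h, Finset.prod_empty] at hprod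
      omega
    · obtain ⟨q, hq⟩ := Finset.card_eq_one.mp h
      have hqp : q.Prime := Nat.prime_of_mem_primeFactors (hq ▸ Finset.mem_singleton_self q)
      rw [hq, Finset.prod_singleton] at hprod
      rw [← hprod] at hnp
      exact hnp hqp
  · intro p hpmem
    have pp := Nat.prime_of_mem_primeFactors hpmem
    have pdvd := Nat.dvd_of_mem_primeFactors hpmem
    haveI : Fact p.Prime := ⟨pp⟩
    obtain ⟨m, hNm⟩ : ∃ m, N = p * m := pdvd
    have hoddpm : Odd (p * m) := hNm ▸ hodd
    have hpodd : Odd p := (Nat.odd_mul.mp hoddpm).1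
    have hmodd : Odd m := (Nat.odd_mul.mp hoddpm).2
    have hp21 : p % 2 = 1 := Nat.odd_iff.mp hpodd
    have hp2 : 2 < p := by have := pp.two_le; omega
    have hm1 : m ≠ 1 := by
      rintro h1
      rw [h1, mul_one] at hNm
      exact hnp (hNm ▸ pp)
    have hm0 : m ≠ 0 := by
      rintro h0
      rw [h0, mul_zero] at hNm
      omega
    have hm2 : 2 < m := by have := Nat.odd_iff.mp hmodd; omega
    have hco : Nat.Coprime p m := by
      rw [Nat.Prime.coprime_iff_not_dvd pp]
      intro hdvd
      exact Nat.squarefree_iff_prime_squarefree.mp hsq p pp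
        (by rw [hNm]; exact Nat.mul_dvd_mul_left p hdvd)
    have hmi' : MonomiallyIrreducible (p * m) := hNm ▸ hmi
    have h2ne : (2 : ZMod p) ≠ 0 := by
      have h2 : ((2:ℕ) : ZMod p) ≠ 0 := by
        rw [Ne, ZMod.natCast_eq_zero_iff]
        intro h
        have := Nat.le_of_dvd (by norm_num) h
        omega
      simpa using h2
    have h5 : p % 5 = 3 ∨ p % 5 = 2 := by
      by_contra h5
      push_neg at h5
      have h5' : p % 5 = 0 ∨ p % 5 = 1 ∨ p % 5 = 4 := by omega
      have hsq5 : IsSquare (5 : ZMod p) := by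
        rcases h5' with h | h | h
        · have hd : (5:ℕ) ∣ p := Nat.dvd_of_mod_eq_zero h
          have hp5 : p = 5 := ((Nat.prime_dvd_prime_iff_eq (by norm_num) pp).mp hd).symm
          subst hp5
          exact ⟨(0 : ZMod 5), z5a⟩
        · haveI : Fact (Nat.Prime 5) := ⟨by norm_num⟩
          have hp2ne : p ≠ 2 := by omega
          have ha0 : ((5:ℤ) : ZMod p) ≠ 0 := by
            intro h0
            have h0' : ((5:ℕ) : ZMod p) = 0 := by exact_mod_cast h0
            rw [ZMod.natCast_eq_zero_iff] at h0'
            have := (Nat.prime_dvd_prime_iff_eq pp (by norm_num)).mp h0'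
            omega
          have hqr : legendreSym p 5 = legendreSym 5 p :=
            legendreSym.quadratic_reciprocity_one_mod_four (p := 5) (q := p)
              (by norm_num) hp2ne
          have h5p : legendreSym 5 (p : ℤ) = 1 := by
            rw [legendreSym.mod 5 ((p : ℕ) : ℤ)]
            have he : ((p : ℕ) : ℤ) % (5 : ℕ) = ((p % 5 : ℕ) : ℤ) := by push_cast; ring_nf
            rw [he, h]
            exact (legendreSym.eq_one_iff 5 z5b).mpr ⟨(1 : ZMod 5), z5c⟩
          have h1 : legendreSym p 5 = 1 := by rw [hqr]; exact h5p
          have := (legendreSym.eq_one_iff p ha0).mp h1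
          exact_mod_cast this
        · haveI : Fact (Nat.Prime 5) := ⟨by norm_num⟩
          have hp2ne : p ≠ 2 := by omega
          have ha0 : ((5:ℤ) : ZMod p) ≠ 0 := by
            intro h0
            have h0' : ((5:ℕ) : ZMod p) = 0 := by exact_mod_cast h0
            rw [ZMod.natCast_eq_zero_iff] at h0'
            have := (Nat.prime_dvd_prime_iff_eq pp (by norm_num)).mp h0'
            omega
          have hqr : legendreSym p 5 = legendreSym 5 p :=
            legendreSym.quadratic_reciprocity_one_mod_four (p := 5) (q := p)
              (by norm_num) hp2ne
          have h5p : legendreSym 5 (p : ℤ) = 1 := by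
            rw [legendreSym.mod 5 ((p : ℕ) : ℤ)]
            have he : ((p : ℕ) : ℤ) % (5 : ℕ) = ((p % 5 : ℕ) : ℤ) := by push_cast; ring_nf
            rw [he, h]
            exact (legendreSym.eq_one_iff 5 z5d).mpr ⟨(2 : ZMod 5), z5e⟩
          have h1 : legendreSym p 5 = 1 := by rw [hqr]; exact h5p
          have := (legendreSym.eq_one_iff p ha0).mp h1
          exact_mod_cast this
      obtain ⟨s, hs⟩ := hsq5
      set c : ZMod p := (2 : ZMod p)⁻¹ with hcdef
      have h2c : (2 : ZMod p) * c = 1 := mul_inv_cancel₀ h2ne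
      have hs' : s * s = 5 := hs.symm
      have hxx : ((s - 1) * c) * ((s - 1) * c) = 1 - (s - 1) * c := by
        linear_combination (c*c) * hs' + ((3 - s)*c + 1) * h2c
      exact mech_gold hp2 hm2 hco hmi' ((s - 1) * c) hxx
    have h8 : p % 8 = 3 ∨ p % 8 = 5 := by
      by_contra h8
      push_neg at h8
      have h8' : p % 8 = 1 ∨ p % 8 = 7 := by omega
      have hsq2 : IsSquare (2 : ZMod p) := (ZMod.exists_sq_eq_two_iff (by omega)).mpr h8'
      obtain ⟨s, hs⟩ := hsq2
      exact mech_sqrt2 hp2 hm2 hco hmi' h2ne s hs.symm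
    refine ⟨pp, hpodd, h5, h8, ?_⟩
    intro hple
    by_contra hnotin
    have hgood : p ∈ goodList := by
      refine enum p (by omega) ⟨by omega, ?_⟩
      intro d _ hd1 hdne hdvd
      rcases (Nat.Prime.eq_one_or_self_of_dvd pp d hdvd) with h | h
      · omega
      · exact hdne h
    fin_cases hgood
    · exact mech_three hm2 hmodd hco hmi'
    · exact bad13 hm2 hco hmi'
    · exact bad37 hm2 hco hmi'
    · exact bad43 hm2 hco hmi'
    · exact bad53 hm2 hco hmi'
    · exact bad67 hm2 hco hmi'
    · exact bad83 hm2 hco hmi'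
    · exact bad157 hm2 hco hmi'
    · exact bad197 hm2 hco hmi'
    · exact bad227 hm2 hco hmi'
    · exact bad293 hm2 hco hmi'
    · exact bad307 hm2 hco hmi'
    · exact bad373 hm2 hco hmi'
    · exact bad397 hm2 hco hmi'
    · exact bad443 hm2 hco hmi'
    · exact bad467 hm2 hco hmi'
    · exact bad547 hm2 hco hmi'
    · exact bad587 hm2 hco hmi'
    · exact bad643 hm2 hco hmi'
    · exact bad677 hm2 hco hmi'
    · exact bad683 hm2 hco hmi'
    · exact bad757 hm2 hco hmi'
    · exact bad797 hm2 hco hmi'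
    · exact bad827 hm2 hco hmi'
    · exact bad853 hm2 hco hmi'
    · exact bad883 hm2 hco hmi'
    · exact bad947 hm2 hco hmi'
    · exact hnotin (by decide)
    · exact hnotin (by decide)
    · exact hnotin (by decide)
    · exact hnotin (by decide)
    · exact hnotin (by decide)
    · exact hnotin (by decide)
    · exact hnotin (by decide)
    · exact hnotin (by decide)
    · exact hnotin (by decide)
    · exact hnotin (by decide)
    · exact hnotin (by decide)
    · exact hnotin (by decide)
    · exact hnotin (by decide)
    · exact hnotin (by decide)
    · exact hnotin (by decide)
    · exact hnotin (by decide)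
    · exact hnotin (by decide)
    · exact hnotin (by decide)


theorem stmt2 (N : ℕ) (hN : 2 ≤ N) (hodd : Odd N) (hnp : ¬ N.Prime)
    (hmi : MonomiallyIrreducible N) :
    ∃ S : Finset ℕ, 2 ≤ S.card ∧ N = ∏ p ∈ S, p ∧
      ∀ p ∈ S, p.Prime ∧ Odd p ∧
        (p % 5 = 3 ∨ p % 5 = 2) ∧
        (p % 8 = 3 ∨ p % 8 = 5) ∧
        (p ≤ 1000 → p ∈ ({107, 163, 173, 277, 283, 317, 347, 523, 557, 563, 613,
          653, 733, 773, 787, 877, 907, 997} : Finset ℕ)) :=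
  stmt2' N hN hodd hnp hmi

end Monomial
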